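/- Let d ∈ (−1,1), ω ∈ ℝ, γ > 0 and β ∈ ℂ, and let ρ : [0,∞) → M₂(ℂ) be differentiable with ρ'(t) = L⋆ᵃ(ρ(t)) for all t ≥ 0 and ρ(0) = ϱ. Then for all t ≥ 0, ‖ ρ(t) − (tr ϱ)·ϱᵃ_∞ ‖₁ ≤ 4 e^{−γt} ( ‖ϱ‖_F + |d · tr ϱ| ), where ‖·‖₁ denotes the trace norm (the trace of the positive semidefinite square root of XᴴX), ‖·‖_F the Frobenius norm, and ϱᵃ_∞ is the explicit 2×2 matrix with entries (ϱᵃ_∞)₁₁ = 1/2 + d(γ² + ω²)/(2(γ² + ω² + 2|β|²)), (ϱᵃ_∞)₁₂ = dβ(γ − iω)/(γ² + ω² + 2|β|²), (ϱᵃ_∞)₂₁ = d·conj(β)(γ + iω)/(γ² + ω² + 2|β|²), (ϱᵃ_∞)₂₂ = 1/2 − d(γ² + ω²)/(2(γ² + ω² + 2|β|²)). -/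

import Mathlib

open Matrix ComplexOrder

/-- `σ⁺ = [[0,1],[0,0]]`. -/
noncomputable def sigmaPlus : Matrix (Fin 2) (Fin 2) ℂ := !![0, 1; 0, 0]

/-- `σ⁻ = [[0,0],[1,0]]`. -/
noncomputable def sigmaMinus : Matrix (Fin 2) (Fin 2) ℂ := !![0, 0; 1, 0]

/-- `σ³ = [[1,0],[0,−1]]`. -/
noncomputable def sigma3 : Matrix (Fin 2) (Fin 2) ℂ := !![1, 0; 0, -1]

/-- The atomic GKSL generator `L⋆ᵃ` on `M₂(ℂ)` with parameters `d, ω, γ, β`. -/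
noncomputable def Lstara (d ω γ : ℝ) (β : ℂ) (ϱ : Matrix (Fin 2) (Fin 2) ℂ) :
    Matrix (Fin 2) (Fin 2) ℂ :=
  (-(Complex.I * (ω : ℂ) / 2)) • (sigma3 * ϱ - ϱ * sigma3)
  + ((γ * (1 - d) : ℝ) : ℂ) •
      (sigmaMinus * ϱ * sigmaPlus - (1 / 2 : ℂ) • (sigmaPlus * sigmaMinus * ϱ)
        - (1 / 2 : ℂ) • (ϱ * (sigmaPlus * sigmaMinus)))
  + ((γ * (1 + d) : ℝ) : ℂ) •
      (sigmaPlus * ϱ * sigmaMinus - (1 / 2 : ℂ) • (sigmaMinus * sigmaPlus * ϱ)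
        - (1 / 2 : ℂ) • (ϱ * (sigmaMinus * sigmaPlus)))
  + (((starRingEnd ℂ) β • sigmaMinus - β • sigmaPlus) * ϱ
      - ϱ * ((starRingEnd ℂ) β • sigmaMinus - β • sigmaPlus))

/-- The equilibrium state `ϱᵃ_∞` of the atomic GKSL generator. -/
noncomputable def rhoAInf (d ω γ : ℝ) (β : ℂ) : Matrix (Fin 2) (Fin 2) ℂ :=
  !![((1 / 2 + d * (γ ^ 2 + ω ^ 2) /
        (2 * (γ ^ 2 + ω ^ 2 + 2 * ‖β‖ ^ 2)) : ℝ) : ℂ),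
     (d : ℂ) * β * ((γ : ℂ) - (ω : ℂ) * Complex.I) /
        (((γ ^ 2 + ω ^ 2 + 2 * ‖β‖ ^ 2 : ℝ)) : ℂ);
     (d : ℂ) * (starRingEnd ℂ) β * ((γ : ℂ) + (ω : ℂ) * Complex.I) /
        (((γ ^ 2 + ω ^ 2 + 2 * ‖β‖ ^ 2 : ℝ)) : ℂ),
     ((1 / 2 - d * (γ ^ 2 + ω ^ 2) /
        (2 * (γ ^ 2 + ω ^ 2 + 2 * ‖β‖ ^ 2)) : ℝ) : ℂ)]

/-- The trace norm `‖X‖₁ = tr √(XᴴX)` of a complex matrix. -/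
noncomputable def traceNorm {n : ℕ} (X : Matrix (Fin n) (Fin n) ℂ) : ℝ :=
  (((Matrix.posSemidef_conjTranspose_mul_self X).1.eigenvectorUnitary.1 *
      diagonal (((↑) : ℝ → ℂ) ∘ (√·) ∘ (Matrix.posSemidef_conjTranspose_mul_self X).1.eigenvalues) *
      (star (Matrix.posSemidef_conjTranspose_mul_self X).1.eigenvectorUnitary :
        Matrix (Fin n) (Fin n) ℂ)).trace).re

/-- The Frobenius norm of a complex matrix. -/
noncomputable def frobeniusNorm {n : ℕ} (X : Matrix (Fin n) (Fin n) ℂ) : ℝ :=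
  Real.sqrt (∑ i, ∑ j, ‖X i j‖ ^ 2)

/-!
Subtracting `(tr ϱ) • ϱᵃ_∞`, a stationary state of trace one, turns `ρ` into a solution `X` of the
same linear equation with `tr X = 0`, because `L⋆ᵃ` preserves the trace. On traceless matrices
`L⋆ᵃ` is dissipative for the real Frobenius inner product, `Re ⟪X, L⋆ᵃ X⟫ ≤ -γ ‖X‖_F²`, since the
`β`-couplings cancel in the real part; Grönwall then gives `‖X t‖_F ≤ e^{-γt} ‖X 0‖_F`. Finally
`‖·‖₁ ≤ √2 ‖·‖_F` on `2 × 2` matrices, and `‖X 0‖_F ≤ ‖ϱ‖_F + |d tr ϱ|` after splitting `ϱ` and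
`ϱᵃ_∞` into their traceless parts and multiples of the identity.
-/

open scoped InnerProductSpace

theorem le_mul_exp_of_hasDerivAt_le_mul {f f' : ℝ → ℝ} {c : ℝ}
    (hf : ∀ t ≥ 0, HasDerivAt f (f' t) t) (hle : ∀ t ≥ 0, f' t ≤ c * f t) :
    ∀ t ≥ 0, f t ≤ f 0 * Real.exp (c * t) := by
  intro t ht
  have h := le_gronwallBound_of_liminf_deriv_right_le (f := f) (f' := f') (δ := f 0) (K := c)
    (ε := 0) (a := 0) (b := t)
    (fun x hx => (hf x hx.1).continuousAt.continuousWithinAt)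
    (fun x hx _ hr => (hf x hx.1).hasDerivWithinAt.liminf_right_slope_le hr) le_rfl
    (fun x hx => by simpa using hle x hx.1) t ⟨ht, le_rfl⟩
  simpa [gronwallBound_ε0] using h

section Norms

variable {n : ℕ}

theorem frobeniusNorm_nonneg (X : Matrix (Fin n) (Fin n) ℂ) : 0 ≤ frobeniusNorm X :=
  Real.sqrt_nonneg _

theorem frobeniusNorm_sq (X : Matrix (Fin n) (Fin n) ℂ) :
    frobeniusNorm X ^ 2 = ∑ i, ∑ j, ‖X i j‖ ^ 2 :=
  Real.sq_sqrt (by positivity)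

section
attribute [local instance] Matrix.frobeniusNormedAddCommGroup Matrix.frobeniusNormedSpace

theorem frobeniusNorm_eq_norm (X : Matrix (Fin n) (Fin n) ℂ) : frobeniusNorm X = ‖X‖ := by
  rw [frobeniusNorm, frobenius_norm_def, Real.sqrt_eq_rpow]
  norm_cast

theorem frobeniusNorm_sub_le (X Y : Matrix (Fin n) (Fin n) ℂ) :
    frobeniusNorm (X - Y) ≤ frobeniusNorm X + frobeniusNorm Y := by
  simpa only [frobeniusNorm_eq_norm] using norm_sub_le X Y

theorem frobeniusNorm_smul (c : ℂ) (X : Matrix (Fin n) (Fin n) ℂ) :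
    frobeniusNorm (c • X) = ‖c‖ * frobeniusNorm X := by
  simpa only [frobeniusNorm_eq_norm] using norm_smul c X

end

theorem sum_eigenvalues_conjTranspose_mul_self (X : Matrix (Fin n) (Fin n) ℂ) :
    ∑ i, (posSemidef_conjTranspose_mul_self X).1.eigenvalues i = ∑ i, ∑ j, ‖X i j‖ ^ 2 := by
  have h := congrArg Complex.re (posSemidef_conjTranspose_mul_self X).1.trace_eq_sum_eigenvalues
  simp only [Complex.coe_algebraMap, Complex.re_sum, Complex.ofReal_re] at h
  rw [← h, trace, Complex.re_sum, Finset.sum_comm]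
  simp only [diag_apply, mul_apply, conjTranspose_apply, RCLike.star_def,
    ← Complex.normSq_eq_conj_mul_self, Complex.normSq_eq_norm_sq, Complex.re_sum,
    Complex.ofReal_re]

theorem traceNorm_eq_sum_sqrt_eigenvalues (X : Matrix (Fin n) (Fin n) ℂ) :
    traceNorm X = ∑ i, √((posSemidef_conjTranspose_mul_self X).1.eigenvalues i) := by
  set hX := (posSemidef_conjTranspose_mul_self X).1
  have hU : (star hX.eigenvectorUnitary : Matrix (Fin n) (Fin n) ℂ) * hX.eigenvectorUnitary = 1 :=
    Unitary.star_mul_self_of_mem hX.eigenvectorUnitary.2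
  rw [traceNorm, trace_mul_cycle, hU, Matrix.one_mul, trace_diagonal, Complex.re_sum]
  rfl

theorem traceNorm_le_sqrt_card_mul_frobeniusNorm (X : Matrix (Fin n) (Fin n) ℂ) :
    traceNorm X ≤ √n * frobeniusNorm X := by
  have hev := (posSemidef_conjTranspose_mul_self X).eigenvalues_nonneg
  rw [traceNorm_eq_sum_sqrt_eigenvalues, frobeniusNorm, ← Real.sqrt_mul (Nat.cast_nonneg n),
    ← sum_eigenvalues_conjTranspose_mul_self]
  refine Real.le_sqrt_of_sq_le ?_
  calc _ ≤ (Finset.univ.card : ℝ) *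
        ∑ i, √((posSemidef_conjTranspose_mul_self X).1.eigenvalues i) ^ 2 :=
        sq_sum_le_card_mul_sum_sq
    _ = _ := by simp [Real.sq_sqrt (hev _)]

theorem hasDerivAt_trace {ρ : ℝ → Matrix (Fin n) (Fin n) ℂ} {ρ' : Matrix (Fin n) (Fin n) ℂ}
    {t : ℝ} (h : ∀ i j, HasDerivAt (fun s => ρ s i j) (ρ' i j) t) :
    HasDerivAt (fun s => (ρ s).trace) ρ'.trace t := by
  simpa [trace] using HasDerivAt.fun_sum fun i _ => h i i

theorem hasDerivAt_frobeniusNorm_sq {ρ : ℝ → Matrix (Fin n) (Fin n) ℂ}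
    {ρ' : Matrix (Fin n) (Fin n) ℂ} {t : ℝ} (h : ∀ i j, HasDerivAt (fun s => ρ s i j) (ρ' i j) t) :
    HasDerivAt (fun s => frobeniusNorm (ρ s) ^ 2) (2 * ∑ i, ∑ j, ⟪ρ t i j, ρ' i j⟫_ℝ) t := by
  simp only [frobeniusNorm_sq, Finset.mul_sum]
  exact HasDerivAt.fun_sum fun i _ => HasDerivAt.fun_sum fun j _ => (h i j).norm_sq

end Norms

section Generator

variable (d ω γ : ℝ) (β : ℂ)

theorem Lstara_eq (m : Matrix (Fin 2) (Fin 2) ℂ) :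
    Lstara d ω γ β m =
      !![-(γ * (1 - d) : ℂ) * m 0 0 + (γ * (1 + d) : ℂ) * m 1 1 - β * m 1 0
            - (starRingEnd ℂ) β * m 0 1,
          -((γ : ℂ) + Complex.I * ω) * m 0 1 + β * (m 0 0 - m 1 1);
        -((γ : ℂ) - Complex.I * ω) * m 1 0 + (starRingEnd ℂ) β * (m 0 0 - m 1 1),
          (γ * (1 - d) : ℂ) * m 0 0 - (γ * (1 + d) : ℂ) * m 1 1 + β * m 1 0
            + (starRingEnd ℂ) β * m 0 1] := by
  ext i j
  fin_cases i <;> fin_cases j <;>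
    simp [Lstara, sigmaPlus, sigmaMinus, sigma3, mul_apply, Fin.sum_univ_two, vecMul, dotProduct,
      vecHead, vecTail] <;> ring

theorem Lstara_sub (A B : Matrix (Fin 2) (Fin 2) ℂ) :
    Lstara d ω γ β (A - B) = Lstara d ω γ β A - Lstara d ω γ β B := by
  ext i j
  fin_cases i <;> fin_cases j <;> simp [Lstara_eq] <;> ring

theorem Lstara_smul (c : ℂ) (A : Matrix (Fin 2) (Fin 2) ℂ) :
    Lstara d ω γ β (c • A) = c • Lstara d ω γ β A := by
  ext i j
  fin_cases i <;> fin_cases j <;> simp [Lstara_eq] <;> ring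

theorem trace_Lstara (m : Matrix (Fin 2) (Fin 2) ℂ) : (Lstara d ω γ β m).trace = 0 := by
  rw [Lstara_eq, trace_fin_two_of]
  ring

theorem trace_rhoAInf : (rhoAInf d ω γ β).trace = 1 := by
  rw [rhoAInf, trace_fin_two_of]
  push_cast
  ring

theorem Lstara_rhoAInf (hD : γ ^ 2 + ω ^ 2 + 2 * ‖β‖ ^ 2 ≠ 0) :
    Lstara d ω γ β (rhoAInf d ω γ β) = 0 := by
  have hD' : (γ : ℂ) ^ 2 + ω ^ 2 + 2 * ‖β‖ ^ 2 ≠ 0 := by exact_mod_cast hD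
  have hβ : β * (starRingEnd ℂ) β = ‖β‖ ^ 2 := Complex.mul_conj' β
  rw [Lstara_eq]
  ext i j
  fin_cases i <;> fin_cases j <;> simp [rhoAInf] <;> field_simp
  · linear_combination (-4 * d * γ : ℂ) * hβ
  · linear_combination (2 * d * β * ω ^ 2 : ℂ) * Complex.I_sq
  · linear_combination (2 * d * (starRingEnd ℂ) β * ω ^ 2 : ℂ) * Complex.I_sq
  · linear_combination (4 * d * γ : ℂ) * hβ

theorem sum_inner_Lstara_le (hγ : 0 ≤ γ) (X : Matrix (Fin 2) (Fin 2) ℂ)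
    (hX : X.trace = 0) :
    ∑ i, ∑ j, ⟪X i j, Lstara d ω γ β X i j⟫_ℝ ≤ -γ * frobeniusNorm X ^ 2 := by
  have h11 : X 1 1 = -X 0 0 := by rw [trace_fin_two] at hX; linear_combination hX
  simp only [frobeniusNorm_sq, Fin.sum_univ_two, Lstara_eq, of_apply, cons_val', cons_val_zero,
    cons_val_one, empty_val', cons_val_fin_one, h11, Complex.inner, Complex.sq_norm]
  simp only [Complex.normSq_apply, Complex.mul_re, Complex.mul_im, Complex.add_re,
    Complex.add_im, Complex.sub_re, Complex.sub_im, Complex.neg_re, Complex.neg_im,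
    Complex.ofReal_re, Complex.ofReal_im, Complex.I_re, Complex.I_im, Complex.conj_re,
    Complex.conj_im, Complex.one_re, Complex.one_im]
  -- the left side is `-γ (4 |X₀₀|² + |X₀₁|² + |X₁₀|²)`
  nlinarith [mul_nonneg hγ (add_nonneg (mul_self_nonneg (X 0 0).re) (mul_self_nonneg (X 0 0).im))]

end Generator

theorem frobeniusNorm_sub_half_trace_smul_one_le (A : Matrix (Fin 2) (Fin 2) ℂ) :
    frobeniusNorm (A - (A.trace / 2) • 1) ≤ frobeniusNorm A := by
  refine Real.sqrt_le_sqrt ?_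
  simp [Fin.sum_univ_two, trace_fin_two, Complex.sq_norm, Complex.normSq_apply]
  nlinarith [sq_nonneg ((A 0 0).re + (A 1 1).re), sq_nonneg ((A 0 0).im + (A 1 1).im)]

theorem frobeniusNorm_rhoAInf_sub_half_le (d ω γ : ℝ) (β : ℂ) :
    frobeniusNorm (rhoAInf d ω γ β - (1 / 2 : ℂ) • 1) ≤ |d| := by
  set G := γ ^ 2 + ω ^ 2
  set D := G + 2 * ‖β‖ ^ 2
  have hG : 0 ≤ G := by positivity
  have hGD : G ≤ D := le_add_of_nonneg_right (by positivity)
  have hG' : ‖(γ : ℂ) ^ 2 + (ω : ℂ) ^ 2‖ = G := by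
    rw [← Real.norm_of_nonneg hG]; norm_cast
  have hD' : ‖(γ : ℂ) ^ 2 + (ω : ℂ) ^ 2 + 2 * (‖β‖ : ℂ) ^ 2‖ = D := by
    rw [← Real.norm_of_nonneg (hG.trans hGD)]; norm_cast
  have hnorm : ∀ z : ℂ, z = γ - ω * Complex.I ∨ z = γ + ω * Complex.I → ‖z‖ ^ 2 = G := by
    rintro z (rfl | rfl) <;> simp [Complex.sq_norm, Complex.normSq_apply, G] <;> ring
  rw [← Real.sqrt_sq_eq_abs]
  refine Real.sqrt_le_sqrt ?_
  simp only [Fin.sum_univ_two, rhoAInf]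
  simp [mul_pow, div_pow]
  rw [hG', hD', hnorm _ (Or.inl rfl), hnorm _ (Or.inr rfl)]
  rcases (hG.trans hGD).eq_or_lt with hD0 | hD0
  · simp [← hD0, sq_nonneg]
  · have key : G * (2 * G + 8 * ‖β‖ ^ 2) ≤ 2 ^ 2 * D ^ 2 := by
      simp only [D]; nlinarith [sq_nonneg (‖β‖ ^ 2)]
    field_simp
    nlinarith [mul_le_mul_of_nonneg_left key (sq_nonneg d)]

theorem frobeniusNorm_sub_trace_smul_rhoAInf_le (d ω γ : ℝ) (β : ℂ)
    (ϱ : Matrix (Fin 2) (Fin 2) ℂ) :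
    frobeniusNorm (ϱ - ϱ.trace • rhoAInf d ω γ β) ≤ frobeniusNorm ϱ + ‖(d : ℂ) * ϱ.trace‖ := by
  have hsplit : ϱ - ϱ.trace • rhoAInf d ω γ β =
      (ϱ - (ϱ.trace / 2) • 1) - ϱ.trace • (rhoAInf d ω γ β - (1 / 2 : ℂ) • 1) := by
    module
  calc frobeniusNorm (ϱ - ϱ.trace • rhoAInf d ω γ β)
      ≤ frobeniusNorm (ϱ - (ϱ.trace / 2) • 1)
          + ‖ϱ.trace‖ * frobeniusNorm (rhoAInf d ω γ β - (1 / 2 : ℂ) • 1) := by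
        rw [hsplit, ← frobeniusNorm_smul]; exact frobeniusNorm_sub_le _ _
    _ ≤ frobeniusNorm ϱ + ‖ϱ.trace‖ * |d| := by
        gcongr
        · exact frobeniusNorm_sub_half_trace_smul_one_le ϱ
        · exact frobeniusNorm_rhoAInf_sub_half_le d ω γ β
    _ = frobeniusNorm ϱ + ‖(d : ℂ) * ϱ.trace‖ := by
        rw [norm_mul, Complex.norm_real, Real.norm_eq_abs, mul_comm]

section Dynamics

variable {d ω γ : ℝ} {β : ℂ}

theorem trace_eq_of_hasDerivAt_Lstara {ρ : ℝ → Matrix (Fin 2) (Fin 2) ℂ}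
    (hρ : ∀ t ≥ (0 : ℝ), ∀ i j,
      HasDerivAt (fun s => ρ s i j) ((Lstara d ω γ β (ρ t)) i j) t) :
    ∀ t ≥ (0 : ℝ), (ρ t).trace = (ρ 0).trace := fun t ht =>
  constant_of_has_deriv_right_zero
    (fun s hs => (hasDerivAt_trace (hρ s hs.1)).continuousAt.continuousWithinAt)
    (fun s hs => by
      simpa [trace_Lstara] using (hasDerivAt_trace (hρ s hs.1)).hasDerivWithinAt)
    t ⟨ht, le_rfl⟩

theorem frobeniusNorm_le_exp_mul_of_hasDerivAt_Lstara (hγ : 0 ≤ γ)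
    {X : ℝ → Matrix (Fin 2) (Fin 2) ℂ}
    (hX : ∀ t ≥ (0 : ℝ), ∀ i j,
      HasDerivAt (fun s => X s i j) ((Lstara d ω γ β (X t)) i j) t)
    (hX0 : (X 0).trace = 0) :
    ∀ t ≥ (0 : ℝ), frobeniusNorm (X t) ≤ Real.exp (-γ * t) * frobeniusNorm (X 0) := by
  have hsq := le_mul_exp_of_hasDerivAt_le_mul (c := -2 * γ)
    (fun t ht => hasDerivAt_frobeniusNorm_sq (hX t ht)) fun t ht => by
      have := sum_inner_Lstara_le d ω γ β hγ (X t) ((trace_eq_of_hasDerivAt_Lstara hX t ht).trans hX0)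
      linarith
  intro t ht
  refine (pow_le_pow_iff_left₀ (frobeniusNorm_nonneg _)
    (mul_nonneg (Real.exp_nonneg _) (frobeniusNorm_nonneg _)) two_ne_zero).mp ?_
  calc frobeniusNorm (X t) ^ 2 ≤ frobeniusNorm (X 0) ^ 2 * Real.exp (-2 * γ * t) := hsq t ht
    _ = (Real.exp (-γ * t) * frobeniusNorm (X 0)) ^ 2 := by
        rw [mul_pow, ← Real.exp_nat_mul]; ring_nf

end Dynamics

theorem atomic_gksl_exponential_convergence_general
    (d ω γ : ℝ) (β : ℂ) (hγ : 0 < γ)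
    (ρ : ℝ → Matrix (Fin 2) (Fin 2) ℂ) (ϱ : Matrix (Fin 2) (Fin 2) ℂ)
    (hρ0 : ρ 0 = ϱ)
    (hρ : ∀ t ≥ (0 : ℝ), ∀ i j,
      HasDerivAt (fun s => ρ s i j) ((Lstara d ω γ β (ρ t)) i j) t) :
    ∀ t ≥ (0 : ℝ),
      traceNorm (ρ t - ϱ.trace • rhoAInf d ω γ β) ≤
        4 * Real.exp (-γ * t) * (frobeniusNorm ϱ + ‖(d : ℂ) * ϱ.trace‖) := by
  intro t ht
  have hD : γ ^ 2 + ω ^ 2 + 2 * ‖β‖ ^ 2 ≠ 0 := by positivity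
  set X : ℝ → Matrix (Fin 2) (Fin 2) ℂ := fun u => ρ u - ϱ.trace • rhoAInf d ω γ β with hXdef
  have hX : ∀ u ≥ (0 : ℝ), ∀ i j,
      HasDerivAt (fun v => X v i j) ((Lstara d ω γ β (X u)) i j) u := by
    intro u hu i j
    rw [hXdef, Lstara_sub, Lstara_smul, Lstara_rhoAInf d ω γ β hD, smul_zero, sub_zero]
    exact (hρ u hu i j).sub_const _
  have hX0 : X 0 = ϱ - ϱ.trace • rhoAInf d ω γ β := by simp only [hXdef, hρ0]
  have hX0_trace : (X 0).trace = 0 := by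
    rw [hX0, trace_sub, trace_smul, trace_rhoAInf, smul_eq_mul, mul_one, sub_self]
  calc traceNorm (X t) ≤ √2 * frobeniusNorm (X t) := by
        simpa using traceNorm_le_sqrt_card_mul_frobeniusNorm (X t)
    _ ≤ √2 * (Real.exp (-γ * t) * (frobeniusNorm ϱ + ‖(d : ℂ) * ϱ.trace‖)) := by
        gcongr
        calc frobeniusNorm (X t) ≤ Real.exp (-γ * t) * frobeniusNorm (X 0) :=
              frobeniusNorm_le_exp_mul_of_hasDerivAt_Lstara hγ.le hX hX0_trace t ht
          _ ≤ _ := by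
              gcongr
              rw [hX0]
              exact frobeniusNorm_sub_trace_smul_rhoAInf_le d ω γ β ϱ
    _ ≤ 4 * Real.exp (-γ * t) * (frobeniusNorm ϱ + ‖(d : ℂ) * ϱ.trace‖) := by
        have hsqrt : √2 ≤ 4 := by
          rw [Real.sqrt_le_left (by norm_num)]; norm_num
        rw [← mul_assoc]
        gcongr
        exact add_nonneg (frobeniusNorm_nonneg ϱ) (norm_nonneg _)

/-- **Exponential convergence of the atomic GKSL semigroup** (Lemma on `L⋆ᵃ`):
any solution of `ρ' = L⋆ᵃ(ρ)` with `ρ(0) = ϱ` satisfies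
`‖ρ(t) − (tr ϱ)·ϱᵃ_∞‖₁ ≤ 4 e^{−γt}(‖ϱ‖_F + |d · tr ϱ|)` for all `t ≥ 0`. -/
theorem atomic_gksl_exponential_convergence
    (d ω γ : ℝ) (β : ℂ) (hd : -1 < d ∧ d < 1) (hγ : 0 < γ)
    (ρ : ℝ → Matrix (Fin 2) (Fin 2) ℂ) (ϱ : Matrix (Fin 2) (Fin 2) ℂ)
    (hρ0 : ρ 0 = ϱ)
    (hρ : ∀ t ≥ (0 : ℝ), ∀ i j,
      HasDerivAt (fun s => ρ s i j) ((Lstara d ω γ β (ρ t)) i j) t) :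
    ∀ t ≥ (0 : ℝ),
      traceNorm (ρ t - ϱ.trace • rhoAInf d ω γ β) ≤
        4 * Real.exp (-γ * t) * (frobeniusNorm ϱ + ‖(d : ℂ) * ϱ.trace‖) :=
  atomic_gksl_exponential_convergence_general d ω γ β hγ ρ ϱ hρ0 hρ
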